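/- Let φ : Ω×M → ℝ be continuous and α ∈ ℝ. For every ω ∈ Ω with K_{φ,α}(ω) ≠ ∅, the fiber Bowen topological entropy satisfies h_top(F, K_{φ,α}(ω), ω) ≤ Λ_{φ,α}(ω), where Λ_{φ,α}(ω) := sup_{ε>0} inf_{δ>0} liminf_{n→∞} (1/n) log N(α,δ,n,ε,ω). -/

import Mathlib

/-! Every point of `K_{φ,α}(ω)` lies in `P(α,δ,n,ω)` for all large `n`, so for any sequence
`n_k → ∞` the union of covers of `P(α,δ,n_k,ω)` by `N(α,δ,n_k,ε,ω)` Bowen balls of order `n_k`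
covers `K_{φ,α}(ω)`. If `s` exceeds `liminf (1/n) log N(α,δ,n,ε,ω)`, the `n_k` can be taken along
the liminf with `N(α,δ,n_k,ε,ω) e^{-s n_k}` summable to an arbitrarily small total, so
`m(K_{φ,α}(ω), s, ε) = 0` and the entropy at scale `ε` is at most `s`. -/

open Set Filter Topology MeasureTheory ENNReal NNReal

noncomputable section

namespace Paper

variable {X : Type*}

/-- Generic Bowen ball for a family of dynamical distances. -/
def cBall (d : ℕ → X → X → ℝ) (n : ℕ) (x : X) (ε : ℝ) : Set X := {y | d n x y < ε}

/-- `m(Z,s,N,ε)`: infimum over finite or countable covers by Bowen balls of order ≥ N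
of `Σ e^{-s n_i}`. -/
def cM (d : ℕ → X → X → ℝ) (Z : Set X) (s : ℝ) (N : ℕ) (ε : ℝ) : ℝ≥0∞ :=
  ⨅ (C : Set (X × ℕ)) (_ : C.Countable) (_ : ∀ p ∈ C, N ≤ p.2)
    (_ : Z ⊆ ⋃ p ∈ C, cBall d p.2 p.1 ε),
    ∑' p : C, ENNReal.ofReal (Real.exp (-s * ((p : X × ℕ).2 : ℝ)))

/-- `m(Z,s,ε) = sup_N m(Z,s,N,ε) = lim_N m(Z,s,N,ε)`. -/
def cMsup (d : ℕ → X → X → ℝ) (Z : Set X) (s : ℝ) (ε : ℝ) : ℝ≥0∞ :=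
  ⨆ N : ℕ, cM d Z s N ε

/-- Bowen topological entropy at scale ε: the critical value of `s ↦ m(Z,s,ε)`. -/
def cHtopScale (d : ℕ → X → X → ℝ) (Z : Set X) (ε : ℝ) : ℝ≥0∞ :=
  ⨅ (s : ℝ) (_ : cMsup d Z s ε = 0), ENNReal.ofReal s

/-- Bowen topological entropy. -/
def cHtop (d : ℕ → X → X → ℝ) (Z : Set X) : ℝ≥0∞ :=
  ⨆ (ε : ℝ) (_ : 0 < ε), cHtopScale d Z ε

variable {Ω M : Type*} [MetricSpace Ω] [MetricSpace M]

/-- Fiber forward iterates `F_ω^n = F_{θ^{n-1}ω} ∘ ⋯ ∘ F_ω`. -/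
def fIter (θ : Ω → Ω) (F : Ω → M → M) (ω : Ω) : ℕ → M → M
  | 0 => id
  | n + 1 => F (θ^[n] ω) ∘ fIter θ F ω n

/-- Fiber Bowen metric `d_ω^n(x,y) = max_{0 ≤ i ≤ n-1} d_M(F_ω^i x, F_ω^i y)`. -/
def dBowen (θ : Ω → Ω) (F : Ω → M → M) (ω : Ω) (n : ℕ) (x y : M) : ℝ :=
  ((Finset.range n).sup fun i => nndist (fIter θ F ω i x) (fIter θ F ω i y) : ℝ≥0)

/-- The skew product `Θ(ω,x) = (θω, F_ω x)`. -/
def skew (θ : Ω → Ω) (F : Ω → M → M) : Ω × M → Ω × M :=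
  fun p => (θ p.1, F p.1 p.2)

/-- The deviation set `P(α,δ,n,ω)`. -/
def Pdev (θ : Ω → Ω) (F : Ω → M → M) (φ : Ω × M → ℝ) (α δ : ℝ) (n : ℕ) (ω : Ω) :
    Set M :=
  {x | |(∑ i ∈ Finset.range n, φ ((skew θ F)^[i] (ω, x))) / (n : ℝ) - α| < δ}

/-- `N(α,δ,n,ε,ω)`: the minimal number of Bowen balls `B_n(ω,x,ε)` needed to cover
`P(α,δ,n,ω)`, with the convention `N = 1` when `P(α,δ,n,ω) = ∅`. -/
def coverMin (θ : Ω → Ω) (F : Ω → M → M) (φ : Ω × M → ℝ) (α δ : ℝ) (n : ℕ) (ε : ℝ)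
    (ω : Ω) : ℕ :=
  max 1 (sInf {k : ℕ | ∃ E : Finset M, E.card = k ∧
    Pdev θ F φ α δ n ω ⊆ ⋃ x ∈ E, cBall (dBowen θ F ω) n x ε})

/-- The conditional level set of the Birkhoff average, `K_{φ,α}(ω)`. -/
def KsetFiber (θ : Ω → Ω) (F : Ω → M → M) (φ : Ω × M → ℝ) (α : ℝ) (ω : Ω) : Set M :=
  {x | Tendsto (fun n : ℕ =>
    (∑ i ∈ Finset.range n, φ ((skew θ F)^[i] (ω, x))) / (n : ℝ)) atTop (𝓝 α)}

lemma natCast_le_exp_of_log_div_lt {c n : ℕ} {t : ℝ} (hn : 1 ≤ n)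
    (h : Real.log c / n < t) : (c : ℝ) ≤ Real.exp (t * n) := by
  rcases Nat.eq_zero_or_pos c with rfl | hc
  · simpa using (Real.exp_pos _).le
  have hn' : (0 : ℝ) < n := by exact_mod_cast hn
  exact ((Real.log_lt_iff_lt_exp (by exact_mod_cast hc)).1 ((div_lt_iff₀ hn').1 h)).le

section BowenEntropy

variable (d : ℕ → X → X → ℝ) {Z : Set X} {P : ℕ → Set X} {ε : ℝ}

lemma cM_le_tsum_card (hZ : ∀ z ∈ Z, ∀ᶠ n in atTop, z ∈ P n) (s : ℝ) {N : ℕ}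
    {ns : ℕ → ℕ} (hns : Tendsto ns atTop atTop) (hN : ∀ k, N ≤ ns k) {E : ℕ → Finset X}
    (hE : ∀ k, P (ns k) ⊆ ⋃ x ∈ E k, cBall d (ns k) x ε) :
    cM d Z s N ε ≤ ∑' k, ((E k).card : ℝ≥0∞) * ENNReal.ofReal (Real.exp (-s * ns k)) := by
  set g : (Σ k, (E k : Set X)) → X × ℕ := fun q => (q.2.1, ns q.1)
  have hcover : Z ⊆ ⋃ p ∈ range g, cBall d p.2 p.1 ε := by
    intro z hz
    obtain ⟨k, hk⟩ := ((hZ z hz).and (hns.eventually (hZ z hz))).exists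
    obtain ⟨x, hx, hzx⟩ := mem_iUnion₂.1 (hE k hk.2)
    exact mem_iUnion₂.2 ⟨g ⟨k, x, hx⟩, mem_range_self _, hzx⟩
  have hcM : cM d Z s N ε ≤ ∑' p : range g, ENNReal.ofReal (Real.exp (-s * (p : X × ℕ).2)) :=
    iInf₂_le_of_le (range g) (countable_range g) <|
      iInf₂_le_of_le (forall_mem_range.2 fun q => hN q.1) hcover le_rfl
  refine hcM.trans <| (ENNReal.tsum_le_tsum_comp_of_surjective
    rangeFactorization_surjective _).trans_eq ?_
  rw [ENNReal.tsum_sigma']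
  congr 1 with k
  simp [g, rangeFactorization, tsum_fintype, Finset.sum_const]

lemma cMsup_eq_zero_of_frequently_card_le_exp (hZ : ∀ z ∈ Z, ∀ᶠ n in atTop, z ∈ P n)
    {s t : ℝ} (hts : t < s)
    (hfreq : ∃ᶠ n : ℕ in atTop, ∃ E : Finset X,
      (E.card : ℝ) ≤ Real.exp (t * n) ∧ P n ⊆ ⋃ x ∈ E, cBall d n x ε) :
    cMsup d Z s ε = 0 := by
  refine ENNReal.iSup_eq_zero.2 fun N => le_zero_iff.1 <|
    le_of_forall_gt_imp_ge_of_dense fun η hη => ?_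
  obtain ⟨r, hr_pos, hr_sum⟩ := ENNReal.exists_pos_sum_of_countable hη.ne' ℕ
  -- `exp ((t - s) n) → 0`, so the `k`-th cover can be taken with weight below `r k`
  have hsmall : ∀ k, ∀ᶠ n : ℕ in atTop, Real.exp ((t - s) * n) < r k := fun k =>
    (Real.tendsto_exp_atBot.comp <| tendsto_natCast_atTop_atTop.const_mul_atTop_of_neg
      (sub_neg.2 hts)).eventually_lt_const (NNReal.coe_pos.2 (hr_pos k))
  have hchoice : ∀ k, ∃ n, max N k ≤ n ∧ Real.exp ((t - s) * n) < r k ∧ ∃ E : Finset X,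
      (E.card : ℝ) ≤ Real.exp (t * n) ∧ P n ⊆ ⋃ x ∈ E, cBall d n x ε := fun k =>
    (((eventually_ge_atTop _).and (hsmall k)).and_frequently hfreq).exists.imp
      fun _ h => ⟨h.1.1, h.1.2, h.2⟩
  choose ns hns_ge hns_small E hE_card hE_cover using hchoice
  have hweight : ∀ k, ((E k).card : ℝ≥0∞) * ENNReal.ofReal (Real.exp (-s * ns k)) ≤ r k := by
    intro k
    rw [← ENNReal.ofReal_natCast, ← ENNReal.ofReal_mul (Nat.cast_nonneg _),
      ← ENNReal.ofReal_coe_nnreal]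
    refine ENNReal.ofReal_le_ofReal ?_
    calc ((E k).card : ℝ) * Real.exp (-s * ns k)
        ≤ Real.exp (t * ns k) * Real.exp (-s * ns k) := by gcongr; exact hE_card k
      _ = Real.exp ((t - s) * ns k) := by rw [← Real.exp_add]; ring_nf
      _ ≤ r k := (hns_small k).le
  calc cM d Z s N ε
      ≤ ∑' k, ((E k).card : ℝ≥0∞) * ENNReal.ofReal (Real.exp (-s * ns k)) :=
        cM_le_tsum_card d hZ s (tendsto_atTop_mono (fun k => (le_max_right N k).trans
          (hns_ge k)) tendsto_id) (fun k => (le_max_left N k).trans (hns_ge k)) hE_cover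
    _ ≤ ∑' k, (r k : ℝ≥0∞) := ENNReal.tsum_le_tsum hweight
    _ ≤ η := hr_sum.le

theorem cHtopScale_le_liminf (hZ : ∀ z ∈ Z, ∀ᶠ n in atTop, z ∈ P n) (c : ℕ → ℕ)
    (hc : ∀ n, ∃ E : Finset X, E.card ≤ c n ∧ P n ⊆ ⋃ x ∈ E, cBall d n x ε) :
    cHtopScale d Z ε ≤
      liminf (fun n => ENNReal.ofReal (Real.log (c n) / n)) atTop := by
  refine le_of_forall_gt_imp_ge_of_dense fun b hb => ?_
  rcases eq_or_ne b ⊤ with rfl | hb_top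
  · exact le_top
  obtain ⟨t, ht_nonneg, hLt, htb⟩ := ENNReal.lt_iff_exists_real_btwn.1 hb
  have hfreq : ∃ᶠ n : ℕ in atTop, ∃ E : Finset X,
      (E.card : ℝ) ≤ Real.exp (t * n) ∧ P n ⊆ ⋃ x ∈ E, cBall d n x ε := by
    refine ((frequently_lt_of_liminf_lt (by isBoundedDefault) hLt).and_eventually
      (eventually_ge_atTop 1)).mono fun n ⟨hlog, hn⟩ => ?_
    obtain ⟨E, hE_card, hE_cover⟩ := hc n
    refine ⟨E, ?_, hE_cover⟩
    exact le_trans (by exact_mod_cast hE_card)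
      (natCast_le_exp_of_log_div_lt hn (ENNReal.ofReal_lt_ofReal_iff'.1 hlog).1)
  have hzero := cMsup_eq_zero_of_frequently_card_le_exp d hZ
    ((ENNReal.ofReal_lt_iff_lt_toReal ht_nonneg hb_top).1 htb) hfreq
  calc cHtopScale d Z ε ≤ ENNReal.ofReal b.toReal := iInf₂_le b.toReal hzero
    _ = b := ENNReal.ofReal_toReal hb_top

end BowenEntropy

lemma eventually_mem_Pdev_of_mem_KsetFiber {Ω M : Type*} {θ : Ω → Ω} {F : Ω → M → M} {ω : Ω}
    {φ : Ω × M → ℝ} {α δ : ℝ} (hδ : 0 < δ) {x : M} (hx : x ∈ KsetFiber θ F φ α ω) :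
    ∀ᶠ n in atTop, x ∈ Pdev θ F φ α δ n ω :=
  (Metric.tendsto_nhds.1 hx) δ hδ

section Fiber

variable {Ω M : Type*} [MetricSpace M] (θ : Ω → Ω) {F : Ω → M → M} (ω : Ω)

lemma mem_cBall_dBowen_iff {n : ℕ} {x y : M} {ε : ℝ} (hε : 0 < ε) :
    y ∈ cBall (dBowen θ F ω) n x ε ↔
      ∀ i ∈ Finset.range n, dist (fIter θ F ω i x) (fIter θ F ω i y) < ε := by
  lift ε to ℝ≥0 using hε.le
  simp only [cBall, dBowen, mem_ofPred_eq, NNReal.coe_lt_coe,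
    ← NNReal.coe_lt_coe (r₁ := nndist _ _), coe_nndist,
    Finset.sup_lt_iff (show (⊥ : ℝ≥0) < ε from hε)]

variable [TopologicalSpace Ω]

lemma continuous_fIter (hF : Continuous fun p : Ω × M => F p.1 p.2) (n : ℕ) :
    Continuous (fIter θ F ω n) := by
  induction n with
  | zero => exact continuous_id
  | succ n ih => exact (hF.comp (continuous_const.prodMk continuous_id)).comp ih

lemma isOpen_cBall_dBowen (hF : Continuous fun p : Ω × M => F p.1 p.2) (n : ℕ) (x : M)
    {ε : ℝ} (hε : 0 < ε) : IsOpen (cBall (dBowen θ F ω) n x ε) := by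
  have hball : cBall (dBowen θ F ω) n x ε =
      ⋂ i ∈ Finset.range n, fIter θ F ω i ⁻¹' Metric.ball (fIter θ F ω i x) ε := by
    ext y
    simp only [mem_cBall_dBowen_iff θ ω hε, mem_iInter₂, mem_preimage, Metric.mem_ball, dist_comm]
  rw [hball]
  exact isOpen_biInter_finset fun i _ => Metric.isOpen_ball.preimage (continuous_fIter θ ω hF i)

lemma exists_finset_cover_cBall_dBowen [CompactSpace M]
    (hF : Continuous fun p : Ω × M => F p.1 p.2) (n : ℕ) {ε : ℝ} (hε : 0 < ε) :
    ∃ E : Finset M, univ ⊆ ⋃ x ∈ E, cBall (dBowen θ F ω) n x ε :=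
  isCompact_univ.elim_finite_subcover _ (fun x => isOpen_cBall_dBowen θ ω hF n x hε)
    fun y _ => mem_iUnion.2 ⟨y, (mem_cBall_dBowen_iff θ ω hε).2 fun i _ => by simpa using hε⟩

lemma exists_cover_card_le_coverMin [CompactSpace M]
    (hF : Continuous fun p : Ω × M => F p.1 p.2) (φ : Ω × M → ℝ) (α δ : ℝ) (n : ℕ)
    {ε : ℝ} (hε : 0 < ε) :
    ∃ E : Finset M, E.card ≤ coverMin θ F φ α δ n ε ω ∧
      Pdev θ F φ α δ n ω ⊆ ⋃ x ∈ E, cBall (dBowen θ F ω) n x ε := by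
  obtain ⟨E₀, hE₀⟩ := exists_finset_cover_cBall_dBowen θ ω hF n hε
  obtain ⟨E, hE_card, hE_cover⟩ :=
    Nat.sInf_mem (⟨E₀.card, E₀, rfl, (subset_univ _).trans hE₀⟩ :
      {k : ℕ | ∃ E : Finset M, E.card = k ∧
        Pdev θ F φ α δ n ω ⊆ ⋃ x ∈ E, cBall (dBowen θ F ω) n x ε}.Nonempty)
  exact ⟨E, hE_card ▸ le_max_right _ _, hE_cover⟩

end Fiber

theorem entropy_level_set_le_Lambda_general
    [CompactSpace M]
    (θ : Ω → Ω)
    (F : Ω → M → M) (hF : Continuous fun p : Ω × M => F p.1 p.2)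
    (φ : Ω × M → ℝ) (α : ℝ) (ω : Ω) :
    cHtop (dBowen θ F ω) (KsetFiber θ F φ α ω) ≤
      ⨆ (ε : ℝ) (_ : 0 < ε), ⨅ (δ : ℝ) (_ : 0 < δ),
        Filter.liminf (fun n : ℕ =>
          ENNReal.ofReal (Real.log (coverMin θ F φ α δ n ε ω) / (n : ℝ))) atTop := by
  refine iSup₂_mono fun ε hε => le_iInf₂ fun δ hδ => ?_
  exact cHtopScale_le_liminf _ (fun x hx => eventually_mem_Pdev_of_mem_KsetFiber hδ hx) _
    fun n => exists_cover_card_le_coverMin θ ω hF φ α δ n hε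

/-- for every `ω` with `K_{φ,α}(ω) ≠ ∅`,
`h_top(F, K_{φ,α}(ω), ω) ≤ Λ_{φ,α}(ω) = sup_{ε>0} inf_{δ>0} liminf_n (1/n) log N(α,δ,n,ε,ω)`. -/
theorem entropy_level_set_le_Lambda
    [CompactSpace Ω] [CompactSpace M]
    (θ : Ω → Ω) (hθ : Continuous θ)
    (F : Ω → M → M) (hF : Continuous fun p : Ω × M => F p.1 p.2)
    (φ : Ω × M → ℝ) (hφ : Continuous φ) (α : ℝ) (ω : Ω)
    (hK : (KsetFiber θ F φ α ω).Nonempty) :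
    cHtop (dBowen θ F ω) (KsetFiber θ F φ α ω) ≤
      ⨆ (ε : ℝ) (_ : 0 < ε), ⨅ (δ : ℝ) (_ : 0 < δ),
        Filter.liminf (fun n : ℕ =>
          ENNReal.ofReal (Real.log (coverMin θ F φ α δ n ε ω) / (n : ℝ))) atTop :=
  entropy_level_set_le_Lambda_general θ F hF φ α ω

end Paper
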